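/- Define U : ℝ^{2n+1} → ℝ by U(x,y,t) := ((1 + |x|² + |y|²)² + t²)^{−(Q−2)/4}. Then U is smooth, strictly positive, and there exists a constant c > 0 such that −Δ_H U(ξ) = c · U(ξ)^{(Q+2)/(Q−2)} for every ξ ∈ ℝ^{2n+1}; that is, U solves the CR Yamabe equation −Δ_H u = c u^{2*−1} on the whole Heisenberg group. -/

import Mathlib

/-!
Write `ρ = 1 + |x|² + |y|²` and `w = ρ² + t²`, so that `U = w ^ a` with `a = -(Q - 2)/4 = -n/2`.
Each `Z_j` is the derivative along a vector field, so `Δ_H` obeys the chain rule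
`Δ_H (g ∘ w) = g''(w) |∇_H w|² + g'(w) Δ_H w`. A direct computation gives
`|∇_H w|² = 16 w (ρ - 1)` and `Δ_H w = 16 (ρ - 1) + 8 n ρ`, hence
`Δ_H w^a = a w^(a-1) (16 a (ρ - 1) + 8 n ρ)`. For `a = -n/2` the terms in `ρ` cancel and
`-Δ_H U = 4 n² w^(a-1) = 4 n² U^((Q+2)/(Q-2))`.
-/

open MeasureTheory Filter Topology

noncomputable section

/-- The Heisenberg group `ℍⁿ` as `ℝⁿ × ℝⁿ × ℝ`, points `ξ = (x, y, t)`. -/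
abbrev H (n : ℕ) : Type := (Fin n → ℝ) × (Fin n → ℝ) × ℝ

/-- `Z_j u = ∂_{x_j} u + 2 y_j ∂_t u`. -/
noncomputable def Zx (n : ℕ) (j : Fin n) (u : H n → ℝ) (ξ : H n) : ℝ :=
  fderiv ℝ u ξ (Pi.single j 1, 0, 0) + 2 * ξ.2.1 j * fderiv ℝ u ξ (0, 0, 1)

/-- `Z_{n+j} u = ∂_{y_j} u − 2 x_j ∂_t u`. -/
noncomputable def Zy (n : ℕ) (j : Fin n) (u : H n → ℝ) (ξ : H n) : ℝ :=
  fderiv ℝ u ξ (0, Pi.single j 1, 0) - 2 * ξ.1 j * fderiv ℝ u ξ (0, 0, 1)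

/-- The Kohn Laplacian (sub-Laplacian) `Δ_H u = Σ_{j=1}^{2n} Z_j (Z_j u)`. -/
noncomputable def subLap (n : ℕ) (u : H n → ℝ) (ξ : H n) : ℝ :=
  ∑ j : Fin n, (Zx n j (Zx n j u) ξ + Zy n j (Zy n j u) ξ)

/-- The homogeneous dimension `Q = 2n + 2`. -/
def Qh (n : ℕ) : ℝ := 2 * n + 2

/-- The Jerison–Lee function `U(x,y,t) = ((1 + |x|² + |y|²)² + t²)^{−(Q−2)/4}`. -/
noncomputable def Ustd (n : ℕ) (ξ : H n) : ℝ :=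
  ((1 + ∑ i, ξ.1 i ^ 2 + ∑ i, ξ.2.1 i ^ 2) ^ 2 + ξ.2.2 ^ 2) ^ (-(Qh n - 2) / 4)

section DerivAlong

variable (𝕜 : Type*) [NontriviallyNormedField 𝕜] {E : Type*} [NormedAddCommGroup E]
  [NormedSpace 𝕜 E]

def derivAlong (V : E → E) (u : E → 𝕜) (ξ : E) : 𝕜 := fderiv 𝕜 u ξ (V ξ)

variable {𝕜} {V : E → E} {u f h : E → 𝕜} {ξ : E}

theorem derivAlong_add (hf : DifferentiableAt 𝕜 f ξ) (hh : DifferentiableAt 𝕜 h ξ) :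
    derivAlong 𝕜 V (fun ξ => f ξ + h ξ) ξ = derivAlong 𝕜 V f ξ + derivAlong 𝕜 V h ξ := by
  simp [derivAlong, fderiv_fun_add hf hh]

theorem derivAlong_sub (hf : DifferentiableAt 𝕜 f ξ) (hh : DifferentiableAt 𝕜 h ξ) :
    derivAlong 𝕜 V (fun ξ => f ξ - h ξ) ξ = derivAlong 𝕜 V f ξ - derivAlong 𝕜 V h ξ := by
  simp [derivAlong, fderiv_fun_sub hf hh]

theorem derivAlong_mul (hf : DifferentiableAt 𝕜 f ξ) (hh : DifferentiableAt 𝕜 h ξ) :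
    derivAlong 𝕜 V (fun ξ => f ξ * h ξ) ξ =
      derivAlong 𝕜 V f ξ * h ξ + f ξ * derivAlong 𝕜 V h ξ := by
  simp [derivAlong, fderiv_fun_mul hf hh, mul_comm, add_comm]

theorem derivAlong_const_mul (c : 𝕜) (hf : DifferentiableAt 𝕜 f ξ) :
    derivAlong 𝕜 V (fun ξ => c * f ξ) ξ = c * derivAlong 𝕜 V f ξ := by
  simp [derivAlong, fderiv_const_mul hf]

theorem derivAlong_comp {g : 𝕜 → 𝕜} {g' : 𝕜} (hg : HasDerivAt g g' (u ξ))
    (hu : DifferentiableAt 𝕜 u ξ) : derivAlong 𝕜 V (g ∘ u) ξ = g' * derivAlong 𝕜 V u ξ := by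
  simp [derivAlong, (hg.comp_hasFDerivAt ξ hu.hasFDerivAt).fderiv]

theorem derivAlong_sq (hf : DifferentiableAt 𝕜 f ξ) :
    derivAlong 𝕜 V (fun ξ => f ξ ^ 2) ξ = 2 * f ξ * derivAlong 𝕜 V f ξ :=
  derivAlong_comp (g := fun x => x ^ 2) (by simpa using hasDerivAt_pow 2 (f ξ)) hf

theorem ContDiff.differentiable_derivAlong (hu : ContDiff 𝕜 2 u) (hV : Differentiable 𝕜 V) :
    Differentiable 𝕜 (derivAlong 𝕜 V u) := fun ξ =>
  ((hu.fderiv_right (m := 1) (by norm_num)).differentiable (by norm_num) ξ).clm_apply (hV ξ)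

theorem derivAlong_derivAlong_comp {g g' : 𝕜 → 𝕜} {g'' : 𝕜}
    (hg : ∀ ξ, HasDerivAt g (g' (u ξ)) (u ξ)) (hg' : HasDerivAt g' g'' (u ξ))
    (hu : ContDiff 𝕜 2 u) (hV : Differentiable 𝕜 V) :
    derivAlong 𝕜 V (derivAlong 𝕜 V (g ∘ u)) ξ =
      g'' * derivAlong 𝕜 V u ξ ^ 2 + g' (u ξ) * derivAlong 𝕜 V (derivAlong 𝕜 V u) ξ := by
  have hu₁ : Differentiable 𝕜 u := hu.differentiable (by norm_num)
  have hchain : derivAlong 𝕜 V (g ∘ u) = fun ξ => (g' ∘ u) ξ * derivAlong 𝕜 V u ξ :=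
    funext fun ξ => derivAlong_comp (hg ξ) (hu₁ ξ)
  rw [hchain, derivAlong_mul (hg'.differentiableAt.comp ξ (hu₁ ξ))
    (hu.differentiable_derivAlong hV ξ), derivAlong_comp hg' (hu₁ ξ)]
  simp only [Function.comp_apply]
  ring

end DerivAlong

namespace Heisenberg

variable {n : ℕ}

def X (n : ℕ) (j : Fin n) (ξ : H n) : H n := (Pi.single j 1, 0, 2 * ξ.2.1 j)

def Y (n : ℕ) (j : Fin n) (ξ : H n) : H n := (0, Pi.single j 1, -(2 * ξ.1 j))

theorem Zx_eq_derivAlong (j : Fin n) : Zx n j = derivAlong ℝ (X n j) := by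
  funext u ξ
  have hX : X n j ξ = (Pi.single j 1, 0, 0) + (2 * ξ.2.1 j) • (0, 0, 1) := by simp [X]
  rw [Zx, derivAlong, hX, map_add, map_smul, smul_eq_mul]

theorem Zy_eq_derivAlong (j : Fin n) : Zy n j = derivAlong ℝ (Y n j) := by
  funext u ξ
  have hY : Y n j ξ = (0, Pi.single j 1, 0) - (2 * ξ.1 j) • (0, 0, 1) := by simp [Y]
  rw [Zy, derivAlong, hY, map_sub, map_smul, smul_eq_mul]

def horizGradSq (n : ℕ) (u : H n → ℝ) (ξ : H n) : ℝ :=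
  ∑ j : Fin n, (Zx n j u ξ ^ 2 + Zy n j u ξ ^ 2)

theorem subLap_comp {u : H n → ℝ} {g g' : ℝ → ℝ} {g'' : ℝ} {ξ : H n}
    (hg : ∀ ξ, HasDerivAt g (g' (u ξ)) (u ξ)) (hg' : HasDerivAt g' g'' (u ξ))
    (hu : ContDiff ℝ 2 u) :
    subLap n (g ∘ u) ξ = g'' * horizGradSq n u ξ + g' (u ξ) * subLap n u ξ := by
  simp only [subLap, horizGradSq, Zx_eq_derivAlong, Zy_eq_derivAlong, Finset.mul_sum,
    ← Finset.sum_add_distrib]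
  refine Finset.sum_congr rfl fun j _ => ?_
  rw [derivAlong_derivAlong_comp hg hg' hu (by unfold X; fun_prop),
    derivAlong_derivAlong_comp hg hg' hu (by unfold Y; fun_prop)]
  ring

def rho (n : ℕ) (ξ : H n) : ℝ := 1 + ∑ i, ξ.1 i ^ 2 + ∑ i, ξ.2.1 i ^ 2

def weight (n : ℕ) (ξ : H n) : ℝ := rho n ξ ^ 2 + ξ.2.2 ^ 2

section FirstOrder

variable (j : Fin n) (ξ : H n)

theorem derivAlong_X_fst : derivAlong ℝ (X n j) (fun ξ => ξ.1 j) ξ = 1 := by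
  simp (disch := fun_prop) [derivAlong, X, fderiv_apply, fderiv.fst]

theorem derivAlong_X_snd_fst : derivAlong ℝ (X n j) (fun ξ => ξ.2.1 j) ξ = 0 := by
  simp (disch := fun_prop) [derivAlong, X, fderiv_apply, fderiv.fst, fderiv.snd]

theorem derivAlong_X_snd_snd : derivAlong ℝ (X n j) (fun ξ => ξ.2.2) ξ = 2 * ξ.2.1 j := by
  simp (disch := fun_prop) [derivAlong, X, fderiv.snd]

theorem derivAlong_X_rho : derivAlong ℝ (X n j) (rho n) ξ = 2 * ξ.1 j := by
  unfold derivAlong rho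
  simp (disch := fun_prop) [X, fderiv_fun_add, fderiv_fun_sum, fderiv_fun_pow, fderiv_apply,
    fderiv.fst, fderiv.snd, Pi.single_apply]

theorem derivAlong_Y_fst : derivAlong ℝ (Y n j) (fun ξ => ξ.1 j) ξ = 0 := by
  simp (disch := fun_prop) [derivAlong, Y, fderiv_apply, fderiv.fst]

theorem derivAlong_Y_snd_fst : derivAlong ℝ (Y n j) (fun ξ => ξ.2.1 j) ξ = 1 := by
  simp (disch := fun_prop) [derivAlong, Y, fderiv_apply, fderiv.fst, fderiv.snd]

theorem derivAlong_Y_snd_snd : derivAlong ℝ (Y n j) (fun ξ => ξ.2.2) ξ = -(2 * ξ.1 j) := by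
  simp (disch := fun_prop) [derivAlong, Y, fderiv.snd]

theorem derivAlong_Y_rho : derivAlong ℝ (Y n j) (rho n) ξ = 2 * ξ.2.1 j := by
  unfold derivAlong rho
  simp (disch := fun_prop) [Y, fderiv_fun_add, fderiv_fun_sum, fderiv_fun_pow, fderiv_apply,
    fderiv.fst, fderiv.snd, Pi.single_apply]

end FirstOrder

@[fun_prop]
theorem differentiable_rho : Differentiable ℝ (rho n) := by
  unfold rho; fun_prop

theorem contDiff_weight {k : WithTop ℕ∞} : ContDiff ℝ k (weight n) := by
  unfold weight rho; fun_prop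

theorem one_le_rho (ξ : H n) : 1 ≤ rho n ξ := by
  have := Finset.sum_nonneg fun i (_ : i ∈ Finset.univ) => sq_nonneg (ξ.1 i)
  have := Finset.sum_nonneg fun i (_ : i ∈ Finset.univ) => sq_nonneg (ξ.2.1 i)
  rw [rho]; linarith

theorem weight_pos (ξ : H n) : 0 < weight n ξ := by
  have := one_le_rho ξ
  rw [weight]; positivity

theorem Zx_weight (j : Fin n) :
    Zx n j (weight n) = fun ξ => 4 * (rho n ξ * ξ.1 j + ξ.2.1 j * ξ.2.2) := by
  funext ξ
  rw [Zx_eq_derivAlong]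
  unfold weight
  simp (disch := fun_prop) only [derivAlong_add, derivAlong_sq, derivAlong_X_rho,
    derivAlong_X_snd_snd]
  ring

theorem Zy_weight (j : Fin n) :
    Zy n j (weight n) = fun ξ => 4 * (rho n ξ * ξ.2.1 j - ξ.1 j * ξ.2.2) := by
  funext ξ
  rw [Zy_eq_derivAlong]
  unfold weight
  simp (disch := fun_prop) only [derivAlong_add, derivAlong_sq, derivAlong_Y_rho,
    derivAlong_Y_snd_snd]
  ring

theorem Zx_Zx_weight (j : Fin n) (ξ : H n) :
    Zx n j (Zx n j (weight n)) ξ = 4 * (rho n ξ + 2 * ξ.1 j ^ 2 + 2 * ξ.2.1 j ^ 2) := by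
  rw [Zx_weight, Zx_eq_derivAlong]
  simp (disch := fun_prop) only [derivAlong_const_mul, derivAlong_add, derivAlong_mul,
    derivAlong_X_rho, derivAlong_X_fst, derivAlong_X_snd_fst, derivAlong_X_snd_snd]
  ring

theorem Zy_Zy_weight (j : Fin n) (ξ : H n) :
    Zy n j (Zy n j (weight n)) ξ = 4 * (rho n ξ + 2 * ξ.1 j ^ 2 + 2 * ξ.2.1 j ^ 2) := by
  rw [Zy_weight, Zy_eq_derivAlong]
  simp (disch := fun_prop) only [derivAlong_const_mul, derivAlong_sub, derivAlong_mul,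
    derivAlong_Y_rho, derivAlong_Y_fst, derivAlong_Y_snd_fst, derivAlong_Y_snd_snd]
  ring

theorem sum_sq_eq_rho_sub_one (ξ : H n) : ∑ j, (ξ.1 j ^ 2 + ξ.2.1 j ^ 2) = rho n ξ - 1 := by
  rw [Finset.sum_add_distrib, rho]; ring

theorem horizGradSq_weight (ξ : H n) :
    horizGradSq n (weight n) ξ = 16 * weight n ξ * (rho n ξ - 1) := by
  rw [← sum_sq_eq_rho_sub_one, Finset.mul_sum]
  refine Finset.sum_congr rfl fun j _ => ?_
  rw [Zx_weight, Zy_weight, weight]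
  ring

theorem subLap_weight (ξ : H n) :
    subLap n (weight n) ξ = 16 * (rho n ξ - 1) + 8 * n * rho n ξ := by
  have hterm : ∀ j, Zx n j (Zx n j (weight n)) ξ + Zy n j (Zy n j (weight n)) ξ
      = 16 * (ξ.1 j ^ 2 + ξ.2.1 j ^ 2) + 8 * rho n ξ := by
    intro j; rw [Zx_Zx_weight, Zy_Zy_weight]; ring
  rw [subLap, Finset.sum_congr rfl fun j _ => hterm j, Finset.sum_add_distrib, ← Finset.mul_sum,
    sum_sq_eq_rho_sub_one, Finset.sum_const, Finset.card_univ, Fintype.card_fin, nsmul_eq_mul]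
  ring

theorem subLap_weight_rpow (a : ℝ) (ξ : H n) :
    subLap n (fun ξ => weight n ξ ^ a) ξ =
      a * weight n ξ ^ (a - 1) * (16 * a * (rho n ξ - 1) + 8 * n * rho n ξ) := by
  have hw := weight_pos ξ
  have hg : ∀ ξ, HasDerivAt (fun x : ℝ => x ^ a) (a * weight n ξ ^ (a - 1)) (weight n ξ) :=
    fun ξ => Real.hasDerivAt_rpow_const (Or.inl (weight_pos ξ).ne')
  have hg' := (Real.hasDerivAt_rpow_const (p := a - 1) (Or.inl hw.ne')).const_mul a
  have hpow : weight n ξ ^ (a - 1 - 1) * weight n ξ = weight n ξ ^ (a - 1) := by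
    rw [← Real.rpow_add_one hw.ne']; ring_nf
  rw [show (fun ξ => weight n ξ ^ a) = (fun x : ℝ => x ^ a) ∘ weight n from rfl,
    subLap_comp (g' := fun x => a * x ^ (a - 1)) hg hg' contDiff_weight,
    horizGradSq_weight, subLap_weight]
  linear_combination (16 * a * (a - 1) * (rho n ξ - 1)) * hpow

end Heisenberg

/-- `U` is smooth, positive, and solves the CR Yamabe equation
`−Δ_H U = c U^{(Q+2)/(Q−2)}` on all of `ℍⁿ`, for some constant `c > 0`. -/
theorem jerison_lee_solves_CR_yamabe (n : ℕ) (hn : 1 ≤ n) :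
    ContDiff ℝ (⊤ : ℕ∞) (Ustd n) ∧ (∀ ξ : H n, 0 < Ustd n ξ) ∧
    ∃ c : ℝ, 0 < c ∧ ∀ ξ : H n,
      -subLap n (Ustd n) ξ = c * (Ustd n ξ) ^ ((Qh n + 2) / (Qh n - 2)) := by
  open Heisenberg in
  have hU : Ustd n = fun ξ => weight n ξ ^ (-(n : ℝ) / 2) := by
    funext ξ; rw [Ustd, Qh, weight, rho]; ring_nf
  have hn₀ : (n : ℝ) ≠ 0 := Nat.cast_ne_zero.mpr (by omega)
  have hexp : -(n : ℝ) / 2 * ((Qh n + 2) / (Qh n - 2)) = -(n : ℝ) / 2 - 1 := by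
    rw [Qh, show 2 * (n : ℝ) + 2 - 2 = 2 * n by ring]; field_simp; ring
  refine ⟨?_, ?_, 4 * (n : ℝ) ^ 2, by positivity, fun ξ => ?_⟩
  · rw [hU, contDiff_iff_contDiffAt]
    exact fun ξ => contDiff_weight.contDiffAt.rpow_const_of_ne (weight_pos ξ).ne'
  · exact fun ξ => hU ▸ Real.rpow_pos_of_pos (weight_pos ξ) _
  · rw [hU, subLap_weight_rpow, ← Real.rpow_mul (weight_pos ξ).le, hexp]
    ring
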